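/- Let X = (X_v, v ∈ V) be a discrete random vector with strictly positive distribution and multivariate logistic parameters η^M = λ^M_M for M ∈ P_0(V). If D ⊆ V is partitioned into classes C_1,...,C_r, then X_{C_1}, ..., X_{C_r} are mutually independent if and only if η^M = 0 for all M in Q(C_1,...,C_r), the family of subsets of D meeting at least two classes. -/

import Mathlib

/-! If the blocks are independent, so are their traces on every `M ⊆ D` (sum out one coordinate
at a time); then `log p_M` is a sum of functions each depending on a single block, and the
alternating sum defining `η^M` kills each of them as soon as `M` meets two blocks.

Conversely, show `p_M = ∏ₖ p_{M ∩ Cₖ}` by induction on `M`; only the case of `M` meeting two blocks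
needs work. There `f = p_M - ∏ₖ p_{M ∩ Cₖ}` sums to zero along each coordinate of `M` by induction,
while `g = log p_M - log ∏ₖ p_{M ∩ Cₖ}` has vanishing top interaction, which by Möbius inversion
writes `g` as a combination of functions each free of some coordinate of `M`. Hence `∑ f g = 0`,
and as `(x - y) (log x - log y) > 0` for positive `x ≠ y`, `f = 0`. -/

open Finset

/-- The marginal distribution of `p` over the margin `M`, as a function of a full cell
depending only on its `M`-coordinates. -/
noncomputable def marg {V : Type*} [Fintype V] [DecidableEq V] {b : V → ℕ}
    (p : ((v : V) → Fin (b v)) → ℝ) (M : Finset V) (i : (v : V) → Fin (b v)) : ℝ :=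
  ∑ k : (v : V) → Fin (b v), if ∀ v ∈ M, k v = i v then p k else 0

/-- The multivariate logistic parameter `η^M = λ^M_M`: the highest-order log-linear
interaction of the marginal distribution `p_M`, obtained by Möbius inversion of
`log p_M` with baseline cell `(0,...,0)`. -/
noncomputable def mlogit {V : Type*} [Fintype V] [DecidableEq V] {b : V → ℕ}
    (hb : ∀ v, 0 < b v) (p : ((v : V) → Fin (b v)) → ℝ)
    (M : Finset V) (i : (v : V) → Fin (b v)) : ℝ :=
  ∑ L ∈ M.powerset, (-1 : ℝ) ^ (M.card - L.card) *
    Real.log (marg p M (fun v => if v ∈ L then i v else ⟨0, hb v⟩))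

open Function

section PiUpdate

variable {V : Type*} [Fintype V] [DecidableEq V] {β : V → Type*} [∀ v, Fintype (β v)]

theorem sum_sum_update_eq_card_smul {R : Type*} [AddCommMonoid R] (K : ((v : V) → β v) → R)
    (v : V) :
    ∑ t, ∑ a : β v, K (update t v a) = Fintype.card (β v) • ∑ t, K t := by
  have hinv : Involutive fun x : ((w : V) → β w) × β v => (update x.1 v x.2, x.1 v) :=
    fun x => by simp [update_idem, update_eq_self]
  rw [← Fintype.sum_prod_type', ← hinv.bijective.sum_comp]
  simp [update_idem, Fintype.sum_prod_type, card_univ, smul_sum]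

theorem sum_mul_eq_zero_of_sum_update_eq_zero {f φ : ((v : V) → β v) → ℝ} {v : V}
    (hf : ∀ t, ∑ a, f (update t v a) = 0)
    (hφ : ∀ t a, φ (update t v a) = φ t) :
    ∑ t, f t * φ t = 0 := by
  have key : Fintype.card (β v) • ∑ t, f t * φ t = 0 := by
    rw [← sum_sum_update_eq_card_smul]
    refine sum_eq_zero fun t _ => ?_
    simp only [hφ, ← sum_mul, hf, zero_mul]
  rcases smul_eq_zero.mp key with hcard | hsum
  · have : IsEmpty (β v) := Fintype.card_eq_zero_iff.mp hcard
    exact sum_eq_zero fun t _ => isEmptyElim (t v)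
  · exact hsum

end PiUpdate

theorem sum_powerset_neg_one_pow_mul_eq_zero {α R : Type*} [DecidableEq α] [CommRing R]
    {M A : Finset α} (hMA : ¬ M ⊆ A) (f : Finset α → R) (hf : ∀ L, f L = f (L ∩ A)) :
    ∑ L ∈ M.powerset, (-1 : R) ^ (M.card - L.card) * f L = 0 := by
  obtain ⟨w, hwM, hwA⟩ := not_subset.mp hMA
  have hw : w ∉ M.erase w := notMem_erase w M
  rw [← insert_erase hwM, sum_powerset_insert hw, ← sum_add_distrib]
  refine sum_eq_zero fun L hL => ?_
  have hLM := mem_powerset.mp hL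
  have hwL : w ∉ L := fun h => hw (hLM h)
  have hf_insert : f (insert w L) = f L := by
    rw [hf, insert_inter_of_notMem hwA, ← hf]
  have hcard := card_le_card hLM
  rw [hf_insert, card_insert_of_notMem hw, card_insert_of_notMem hwL, Nat.add_sub_add_right,
    show (M.erase w).card + 1 - L.card = (M.erase w).card - L.card + 1 by omega, pow_succ]
  ring

theorem sub_mul_log_sub_log_pos {x y : ℝ} (hx : 0 < x) (hy : 0 < y) (hxy : x ≠ y) :
    0 < (x - y) * (Real.log x - Real.log y) := by
  rcases hxy.lt_or_gt with h | h
  · exact mul_pos_of_neg_of_neg (sub_neg.mpr h) (sub_neg.mpr (Real.log_lt_log hx h))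
  · exact mul_pos (sub_pos.mpr h) (sub_pos.mpr (Real.log_lt_log hy h))

theorem eq_of_sum_sub_mul_log_sub_log_eq_zero {ι : Type*} [Fintype ι] {x y : ι → ℝ}
    (hx : ∀ i, 0 < x i) (hy : ∀ i, 0 < y i)
    (h : ∑ i, (x i - y i) * (Real.log (x i) - Real.log (y i)) = 0) : x = y := by
  have hterm (i : ι) : 0 ≤ (x i - y i) * (Real.log (x i) - Real.log (y i)) := by
    rcases eq_or_ne (x i) (y i) with hxy | hxy
    · simp [hxy]
    · exact (sub_mul_log_sub_log_pos (hx i) (hy i) hxy).le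
  funext i
  by_contra hxy
  have := (sum_eq_zero_iff_of_nonneg fun i _ => hterm i).mp h i (mem_univ i)
  exact (sub_mul_log_sub_log_pos (hx i) (hy i) hxy).ne' this

section Marginal

variable {V : Type*} [Fintype V] [DecidableEq V] {b : V → ℕ}

theorem marg_dependsOn (p : ((v : V) → Fin (b v)) → ℝ) (M : Finset V) :
    DependsOn (marg p M) ↑M := fun i j hij => by
  unfold marg
  refine sum_congr rfl fun k _ => if_congr ?_ rfl rfl
  exact forall₂_congr fun v hv => by rw [hij v hv]

theorem marg_pos {p : ((v : V) → Fin (b v)) → ℝ} (hpos : ∀ k, 0 < p k)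
    (M : Finset V) (i : (v : V) → Fin (b v)) : 0 < marg p M i :=
  sum_pos' (fun k _ => by split <;> simp [(hpos k).le]) ⟨i, mem_univ i, by simp [hpos i]⟩

theorem marg_empty (p : ((v : V) → Fin (b v)) → ℝ) (i : (v : V) → Fin (b v)) :
    marg p ∅ i = ∑ k, p k := by
  simp [marg]

theorem sum_marg_update (p : ((v : V) → Fin (b v)) → ℝ) {M : Finset V} {v : V} (hv : v ∈ M)
    (i : (v : V) → Fin (b v)) :
    ∑ a, marg p M (update i v a) = marg p (M.erase v) i := by
  have hcond (k : (v : V) → Fin (b v)) (a : Fin (b v)) :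
      (∀ w ∈ M, k w = update i v a w) ↔ (a = k v ∧ ∀ w ∈ M.erase v, k w = i w) := by
    rw [← insert_erase hv, forall_mem_insert, update_self, erase_insert (notMem_erase v M),
      eq_comm]
    refine and_congr_right fun _ => forall₂_congr fun w hw => ?_
    rw [update_of_ne (ne_of_mem_erase hw)]
  unfold marg
  rw [sum_comm]
  simp only [hcond, ite_and, sum_ite_eq', mem_univ, if_true]

end Marginal

section Moebius

variable {V : Type*} [DecidableEq V] {b : V → ℕ}

def baselineCell (hb : ∀ v, 0 < b v) (L : Finset V) (i : (v : V) → Fin (b v)) :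
    (v : V) → Fin (b v) :=
  fun v => if v ∈ L then i v else ⟨0, hb v⟩

def moebius (hb : ∀ v, 0 < b v) (M : Finset V) (g : ((v : V) → Fin (b v)) → ℝ)
    (i : (v : V) → Fin (b v)) : ℝ :=
  ∑ L ∈ M.powerset, (-1 : ℝ) ^ (M.card - L.card) * g (baselineCell hb L i)

variable (hb : ∀ v, 0 < b v)

theorem mlogit_eq_moebius [Fintype V] (p : ((v : V) → Fin (b v)) → ℝ) (M : Finset V)
    (i : (v : V) → Fin (b v)) :
    mlogit hb p M i = moebius hb M (fun t => Real.log (marg p M t)) i :=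
  rfl

theorem baselineCell_update_of_notMem {L : Finset V} {v : V} (hv : v ∉ L)
    (t : (v : V) → Fin (b v)) (a : Fin (b v)) :
    baselineCell hb L (update t v a) = baselineCell hb L t := by
  funext w
  unfold baselineCell
  split_ifs with hw
  · exact update_of_ne (ne_of_mem_of_not_mem hw hv) a t
  · rfl

theorem moebius_sum {ι : Type*} (s : Finset ι) (M : Finset V)
    (g : ι → ((v : V) → Fin (b v)) → ℝ) (i : (v : V) → Fin (b v)) :
    moebius hb M (fun t => ∑ k ∈ s, g k t) i = ∑ k ∈ s, moebius hb M (g k) i := by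
  simp only [moebius, mul_sum]
  exact sum_comm

theorem moebius_sub (M : Finset V) (g h : ((v : V) → Fin (b v)) → ℝ)
    (i : (v : V) → Fin (b v)) :
    moebius hb M (fun t => g t - h t) i = moebius hb M g i - moebius hb M h i := by
  simp only [moebius, mul_sub, sum_sub_distrib]

theorem moebius_eq_zero_of_not_subset {M A : Finset V} {g : ((v : V) → Fin (b v)) → ℝ}
    (hg : DependsOn g ↑A) (hMA : ¬ M ⊆ A) (i : (v : V) → Fin (b v)) :
    moebius hb M g i = 0 :=
  sum_powerset_neg_one_pow_mul_eq_zero hMA _ fun L => hg fun v hv => by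
    simp [baselineCell, show v ∈ A from hv]

theorem sum_mul_eq_zero_of_moebius_eq_zero [Fintype V] {M : Finset V}
    {f g : ((v : V) → Fin (b v)) → ℝ}
    (hg : DependsOn g ↑M) (hmoeb : ∀ t, moebius hb M g t = 0)
    (hf : ∀ v ∈ M, ∀ t, ∑ a, f (update t v a) = 0) :
    ∑ t, f t * g t = 0 := by
  have hg_expand (t : (v : V) → Fin (b v)) : g t = -∑ L ∈ M.powerset.erase M,
      (-1 : ℝ) ^ (M.card - L.card) * g (baselineCell hb L t) := by
    have h := hmoeb t
    rw [moebius, ← add_sum_erase _ _ (mem_powerset_self M), Nat.sub_self, pow_zero, one_mul,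
      hg (y := t) fun v hv => by simp [baselineCell, show v ∈ M from hv]] at h
    linarith
  have hvanish : ∀ L ∈ M.powerset.erase M, ∑ t, f t * g (baselineCell hb L t) = 0 := by
    intro L hL
    obtain ⟨hLM, hL⟩ := mem_erase.mp hL
    obtain ⟨v, hvM, hvL⟩ :=
      not_subset.mp fun hML => hLM (Subset.antisymm (mem_powerset.mp hL) hML)
    refine sum_mul_eq_zero_of_sum_update_eq_zero (hf v hvM) fun t a => ?_
    rw [baselineCell_update_of_notMem hb hvL]
  calc ∑ t, f t * g t
      = ∑ t, f t * -∑ L ∈ M.powerset.erase M,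
          (-1 : ℝ) ^ (M.card - L.card) * g (baselineCell hb L t) :=
        sum_congr rfl fun t _ => by rw [← hg_expand t]
    _ = -∑ L ∈ M.powerset.erase M,
          (-1 : ℝ) ^ (M.card - L.card) * ∑ t, f t * g (baselineCell hb L t) := by
        simp only [mul_neg, sum_neg_distrib, mul_sum, neg_inj]
        rw [sum_comm]
        exact sum_congr rfl fun L _ => sum_congr rfl fun t _ => by ring
    _ = 0 := by rw [sum_eq_zero fun L hL => by rw [hvanish L hL, mul_zero], neg_zero]

end Moebius

section BlockProduct

variable {V : Type*} [Fintype V] [DecidableEq V] {b : V → ℕ} {ι : Type*} [Fintype ι]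
  {p : ((v : V) → Fin (b v)) → ℝ} {C : ι → Finset V}

variable (p C) in
/-- The marginal of `M` under the model in which the blocks `M ∩ C k` are mutually independent. -/
noncomputable def prodMarg (M : Finset V) (i : (v : V) → Fin (b v)) : ℝ :=
  ∏ k, marg p (M ∩ C k) i

theorem prodMarg_pos (hpos : ∀ k, 0 < p k) (M : Finset V) (i : (v : V) → Fin (b v)) :
    0 < prodMarg p C M i :=
  prod_pos fun _ _ => marg_pos hpos _ i

variable (p C) in
theorem prodMarg_dependsOn (M : Finset V) : DependsOn (prodMarg p C M) ↑M := fun _ _ hij =>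
  prod_congr rfl fun _ _ => marg_dependsOn p _ fun v hv => hij v (mem_of_mem_inter_left hv)

theorem sum_prodMarg_update [DecidableEq ι] (hC : Pairwise (Disjoint on C)) {M : Finset V}
    {v : V} {k₀ : ι}
    (hvC : v ∈ C k₀) (hvM : v ∈ M) (t : (v : V) → Fin (b v)) :
    ∑ a, prodMarg p C M (update t v a) = prodMarg p C (M.erase v) t := by
  have hother (k : ι) (hk : k ≠ k₀) (a : Fin (b v)) :
      marg p (M ∩ C k) (update t v a) = marg p (M.erase v ∩ C k) t := by
    have hvk : v ∉ C k := disjoint_left.mp (hC hk.symm) hvC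
    rw [erase_inter, erase_eq_of_notMem fun h => hvk (mem_of_mem_inter_right h)]
    exact marg_dependsOn p _ fun w hw => update_of_ne
      (ne_of_mem_of_not_mem (mem_of_mem_inter_right hw) hvk) a t
  calc ∑ a, prodMarg p C M (update t v a)
      = ∑ a, marg p (M ∩ C k₀) (update t v a) *
          ∏ k ∈ univ.erase k₀, marg p (M.erase v ∩ C k) t :=
        sum_congr rfl fun a _ => by
          rw [prodMarg, ← mul_prod_erase univ _ (mem_univ k₀),
            prod_congr rfl fun k hk => hother k (ne_of_mem_erase hk) a]
    _ = prodMarg p C (M.erase v) t := by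
        rw [← sum_mul, sum_marg_update p (mem_inter.mpr ⟨hvM, hvC⟩), ← erase_inter, prodMarg,
          mul_prod_erase univ (fun k => marg p (M.erase v ∩ C k) t) (mem_univ k₀)]

theorem marg_erase_eq_prodMarg [DecidableEq ι] (hC : Pairwise (Disjoint on C)) {M : Finset V}
    {v : V} {k₀ : ι} (hvC : v ∈ C k₀) (hvM : v ∈ M) (h : marg p M = prodMarg p C M) :
    marg p (M.erase v) = prodMarg p C (M.erase v) := funext fun t => by
  rw [← sum_marg_update p hvM, ← sum_prodMarg_update hC hvC hvM, h]

theorem prodMarg_eq_marg_of_subset (hsum : ∑ i, p i = 1) (hC : Pairwise (Disjoint on C))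
    {M : Finset V} {k₀ : ι} (hM : M ⊆ C k₀) : prodMarg p C M = marg p M := funext fun t => by
  rw [prodMarg, prod_eq_single k₀ (fun k _ hk => ?_) (absurd (mem_univ k₀)),
    inter_eq_left.mpr hM]
  rw [disjoint_iff_inter_eq_empty.mp ((hC hk.symm).mono_left hM), marg_empty, hsum]

theorem moebius_log_prodMarg_eq_zero (hb : ∀ v, 0 < b v) (hpos : ∀ k, 0 < p k) {M : Finset V}
    (hmix : ∀ k, ¬ M ⊆ C k) (i : (v : V) → Fin (b v)) :
    moebius hb M (fun t => Real.log (prodMarg p C M t)) i = 0 := by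
  have hlog : (fun t => Real.log (prodMarg p C M t)) =
      fun t => ∑ k, Real.log (marg p (M ∩ C k) t) :=
    funext fun t => Real.log_prod fun k _ => (marg_pos hpos _ t).ne'
  rw [hlog, moebius_sum]
  exact sum_eq_zero fun k _ => moebius_eq_zero_of_not_subset hb
    (fun x y hxy => congrArg Real.log (marg_dependsOn p _ hxy))
    (fun h => hmix k (h.trans inter_subset_right)) i

theorem marg_eq_prodMarg_of_subset [DecidableEq ι] (hC : Pairwise (Disjoint on C))
    {D M : Finset V} (hD : D ⊆ univ.biUnion C) (hfac : marg p D = prodMarg p C D) (hMD : M ⊆ D) :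
    marg p M = prodMarg p C M := by
  suffices h : ∀ E : Finset V, marg p (D \ E) = prodMarg p C (D \ E) by
    simpa only [Finset.sdiff_sdiff_eq_self hMD] using h (D \ M)
  intro E
  induction E using Finset.induction_on with
  | empty => rwa [sdiff_empty]
  | insert v E _ ih =>
    rw [sdiff_insert]
    by_cases hv : v ∈ D \ E
    · obtain ⟨k, -, hvC⟩ := mem_biUnion.mp (hD (mem_sdiff.mp hv).1)
      exact marg_erase_eq_prodMarg hC hvC hv ih
    · rwa [erase_eq_of_notMem hv]

theorem marg_eq_prodMarg_of_mlogit_eq_zero [DecidableEq ι] (hb : ∀ v, 0 < b v)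
    (hpos : ∀ k, 0 < p k) (hC : Pairwise (Disjoint on C)) {M : Finset V} (hM : M ⊆ univ.biUnion C)
    (hmix : ∀ k, ¬ M ⊆ C k) (hlogit : ∀ t, mlogit hb p M t = 0)
    (herase : ∀ v ∈ M, marg p (M.erase v) = prodMarg p C (M.erase v)) :
    marg p M = prodMarg p C M := by
  refine eq_of_sum_sub_mul_log_sub_log_eq_zero (marg_pos hpos M) (prodMarg_pos hpos M) ?_
  refine sum_mul_eq_zero_of_moebius_eq_zero hb (M := M) ?_ (fun t => ?_) (fun v hv t => ?_)
  · exact fun x y hxy => by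
      rw [marg_dependsOn p M hxy, prodMarg_dependsOn p C M hxy]
  · rw [moebius_sub, ← mlogit_eq_moebius, hlogit, moebius_log_prodMarg_eq_zero hb hpos hmix,
      sub_zero]
  · obtain ⟨k, -, hvC⟩ := mem_biUnion.mp (hM hv)
    rw [sum_sub_distrib, sum_marg_update p hv, sum_prodMarg_update hC hvC hv, herase v hv,
      sub_self]

theorem marg_eq_prodMarg_of_forall_mlogit_eq_zero [DecidableEq ι] (hb : ∀ v, 0 < b v)
    (hpos : ∀ k, 0 < p k) (hsum : ∑ i, p i = 1) (hC : Pairwise (Disjoint on C))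
    (hlogit : ∀ M ⊆ univ.biUnion C, (∀ k, ¬ M ⊆ C k) → ∀ t, mlogit hb p M t = 0)
    {M : Finset V} (hM : M ⊆ univ.biUnion C) : marg p M = prodMarg p C M := by
  induction M using Finset.strongInduction with
  | H M ih =>
    by_cases hmix : ∀ k, ¬ M ⊆ C k
    · exact marg_eq_prodMarg_of_mlogit_eq_zero hb hpos hC hM hmix (hlogit M hM hmix)
        fun v hv => ih _ (erase_ssubset hv) ((erase_subset v M).trans hM)
    · push Not at hmix
      obtain ⟨k, hk⟩ := hmix
      exact (prodMarg_eq_marg_of_subset hsum hC hk).symm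

end BlockProduct

theorem stmt11_general {V : Type*} [Fintype V] [DecidableEq V] {b : V → ℕ} (hb : ∀ v, 0 < b v)
    (p : ((v : V) → Fin (b v)) → ℝ) (hpos : ∀ i, 0 < p i) (hsum : ∑ i, p i = 1)
    (D : Finset V) (r : ℕ) (C : Fin r → Finset V)
    (hsub : ∀ k, C k ⊆ D)
    (hdisj : ∀ j k, j ≠ k → Disjoint (C j) (C k))
    (hcover : D = Finset.univ.biUnion C) :
    (∀ i, marg p D i = ∏ k, marg p (C k) i) ↔
      (∀ M : Finset V, M ⊆ D → (∀ k, ¬ M ⊆ C k) → ∀ i, mlogit hb p M i = 0) := by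
  subst hcover
  have hprod (i : (v : V) → Fin (b v)) :
      ∏ k, marg p (C k) i = prodMarg p C (univ.biUnion C) i :=
    prod_congr rfl fun k _ => by rw [inter_eq_right.mpr (hsub k)]
  constructor
  · intro hfac M hM hmix i
    rw [mlogit_eq_moebius, marg_eq_prodMarg_of_subset hdisj subset_rfl
      (funext fun i => (hfac i).trans (hprod i)) hM]
    exact moebius_log_prodMarg_eq_zero hb hpos hmix i
  · intro hlogit i
    rw [hprod, marg_eq_prodMarg_of_forall_mlogit_eq_zero hb hpos hsum hdisj hlogit subset_rfl]

/-- if `D ⊆ V` is partitioned into classes `C 0, ..., C (r-1)`, then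
`X_{C_1}, ..., X_{C_r}` are mutually independent iff `η^M = 0` for all subsets `M` of `D`
not contained in a single class (i.e. meeting at least two classes). -/
theorem stmt11 {V : Type*} [Fintype V] [DecidableEq V] {b : V → ℕ} (hb : ∀ v, 0 < b v)
    (p : ((v : V) → Fin (b v)) → ℝ) (hpos : ∀ i, 0 < p i) (hsum : ∑ i, p i = 1)
    (D : Finset V) (r : ℕ) (C : Fin r → Finset V)
    (hsub : ∀ k, C k ⊆ D) (hne : ∀ k, (C k).Nonempty)
    (hdisj : ∀ j k, j ≠ k → Disjoint (C j) (C k))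
    (hcover : D = Finset.univ.biUnion C) :
    (∀ i, marg p D i = ∏ k, marg p (C k) i) ↔
      (∀ M : Finset V, M ⊆ D → (∀ k, ¬ M ⊆ C k) → ∀ i, mlogit hb p M i = 0) :=
  stmt11_general hb p hpos hsum D r C hsub hdisj hcover
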